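/- There exists a family of homeomorphisms Θ_{n,i} : Δ_n → Δ_n (n ∈ ℕ₀, i ∈ {0,1}) such that for every commutative ring R with unit, every pair m = (m_0, m_1) ∈ R², every topological space X, and every n ∈ ℕ₀, the boundary operators for L = 1 built from this family satisfy ∂_n ∘ ∂_{n+1} = 0 on F(R)_{n+1}(X). -/

import Mathlib

open scoped BigOperators

noncomputable section

/-- `Spx k` is the standard simplex on `k` coordinates, i.e. the standard simplex
`Δ_{k-1}` of the paper, as a subspace of `ℝ^k`. -/
abbrev Spx (k : ℕ) : Type := {x : Fin k → ℝ // x ∈ stdSimplex ℝ (Fin k)}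

/-- the value `v = i/((L+1)(n+1))` inserted by the face map `⟨·⟩_{L,n,i,j}`. -/
def vval (L n : ℕ) (i : Fin (L+1)) : ℝ := (i : ℝ) / (((L:ℝ)+1) * ((n:ℝ)+1))

lemma vval_nonneg (L n : ℕ) (i : Fin (L+1)) : 0 ≤ vval L n i := by
  unfold vval; positivity

lemma vval_lt_one (L n : ℕ) (i : Fin (L+1)) : vval L n i < 1 := by
  unfold vval
  rw [div_lt_one (by positivity)]
  have h1 : (i : ℝ) < (L:ℝ)+1 := by exact_mod_cast i.isLt
  have h2 : ((L:ℝ)+1) ≤ ((L:ℝ)+1) * ((n:ℝ)+1) := by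
    nlinarith [Nat.cast_nonneg (α := ℝ) L, Nat.cast_nonneg (α := ℝ) n]
  linarith

/-- the underlying function of the face map `⟨id⟩_{L,n,i,j} : Δ_{n-1} → Δ_n`:
insert the value `v` at position `j` and rescale the remaining coordinates by `1 - v`. -/
def faceFun (L n : ℕ) (i : Fin (L+1)) (j : Fin (n+1)) (x : Fin n → ℝ) : Fin (n+1) → ℝ :=
  j.insertNth (vval L n i) (fun k => (1 - vval L n i) * x k)

lemma faceFun_mem (L n : ℕ) (i : Fin (L+1)) (j : Fin (n+1)) {x : Fin n → ℝ}
    (hx : x ∈ stdSimplex ℝ (Fin n)) :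
    faceFun L n i j x ∈ stdSimplex ℝ (Fin (n+1)) := by
  constructor
  · intro m
    rcases eq_or_ne m j with rfl | h
    · simpa [faceFun] using vval_nonneg L n i
    · obtain ⟨k, rfl⟩ := Fin.exists_succAbove_eq h
      simp only [faceFun, Fin.insertNth_apply_succAbove]
      exact mul_nonneg (by linarith [vval_lt_one L n i]) (hx.1 k)
  · rw [Fin.sum_univ_succAbove _ j]
    simp only [faceFun, Fin.insertNth_apply_same, Fin.insertNth_apply_succAbove]
    rw [← Finset.mul_sum, hx.2]
    ring

/-- the face map `⟨id⟩_{L,n,i,j} : Δ_{n-1} → Δ_n` as a continuous map. -/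
def faceCM (L n : ℕ) (i : Fin (L+1)) (j : Fin (n+1)) : C(Spx n, Spx (n+1)) where
  toFun x := ⟨faceFun L n i j x.1, faceFun_mem L n i j x.2⟩
  continuous_toFun := by
    refine Continuous.subtype_mk ?_ _
    refine continuous_pi fun m => ?_
    rcases eq_or_ne m j with rfl | h
    · simpa [faceFun] using (continuous_const : Continuous fun _ : Spx n => vval L n i)
    · obtain ⟨k, rfl⟩ := Fin.exists_succAbove_eq h
      simp only [faceFun, Fin.insertNth_apply_succAbove]
      exact continuous_const.mul ((continuous_apply k).comp continuous_subtype_val)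

open Fin.NatCast in
/-- `EQUATION_{n,j≤p,i,k}` of the paper, where `n = n'+1 ≥ 1`: the equality of the
two composite maps `Δ_{n-1} → Δ_{n+1}`, namely
`⟨id⟩_{L,n+1,i,j} ∘ Θ_{L,n,i} ∘ ⟨id⟩_{L,n,k,p} ∘ Θ_{L,n-1,k}
  = ⟨id⟩_{L,n+1,k,p+1} ∘ Θ_{L,n,k} ∘ ⟨id⟩_{L,n,i,j} ∘ Θ_{L,n-1,i}`. -/
def EquationHolds (L : ℕ)
    (Θ : ∀ n : ℕ, Fin (L+1) → (Spx (n+1) ≃ₜ Spx (n+1)))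
    (n' : ℕ) (i k : Fin (L+1)) (j p : Fin (n'+2)) : Prop :=
  ∀ x : Spx (n'+1),
    faceCM L (n'+2) i j.castSucc ((Θ (n'+1) i) (faceCM L (n'+1) k p ((Θ n' k) x))) =
    faceCM L (n'+2) k p.succ ((Θ (n'+1) k) (faceCM L (n'+1) i j.castSucc ((Θ n' i) x)))

variable (R : Type) [CommRing R] (X : Type) [TopologicalSpace X]

/-- `Chains R X k` is the module `F(R)_{k-1}(X)` of the paper; in particular
`Chains R X 0 = F(R)_{-1}(X)` is the zero module, and `Chains R X (n+1) = F(R)_n(X)`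
is the free `R`-module on the set of continuous maps `Δ_n → X`. -/
def Chains : ℕ → Type
  | 0 => PUnit
  | (n+1) => C(Spx (n+1), X) →₀ R

instance : ∀ k, AddCommGroup (Chains R X k)
  | 0 => inferInstanceAs (AddCommGroup PUnit)
  | (n+1) => inferInstanceAs (AddCommGroup (C(Spx (n+1), X) →₀ R))

instance (priority := 10000) : ∀ k, Module R (Chains R X k)
  | 0 => inferInstanceAs (Module R PUnit)
  | (n+1) => inferInstanceAs (Module R (C(Spx (n+1), X) →₀ R))

variable {X}

/-- the continuous map `⟨T⟩_{L,n+1,i,j} ∘ Θ_{L,n,i} : Δ_n → X`, for `T : Δ_{n+1} → X`. -/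
def chainFace (L : ℕ) (Θ : ∀ n : ℕ, Fin (L+1) → (Spx (n+1) ≃ₜ Spx (n+1))) (n : ℕ)
    (T : C(Spx (n+2), X)) (i : Fin (L+1)) (j : Fin (n+2)) : C(Spx (n+1), X) :=
  (T.comp (faceCM L (n+1) i j)).comp (Θ n i : C(Spx (n+1), Spx (n+1)))

variable (X)

/-- the boundary operator `∂_{n+1} : F(R)_{n+1}(X) → F(R)_n(X)` of the paper:
`∂(T) = Σ_j (-1)^j Σ_i m_i • [⟨T⟩_{L,n+1,i,j} ∘ Θ_{L,n,i}]` on basis elements. -/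
def bddry (L : ℕ) (m : Fin (L+1) → R)
    (Θ : ∀ n : ℕ, Fin (L+1) → (Spx (n+1) ≃ₜ Spx (n+1))) (n : ℕ) :
    (C(Spx (n+2), X) →₀ R) →ₗ[R] (C(Spx (n+1), X) →₀ R) :=
  Finsupp.lift _ R _ (fun T => ∑ j : Fin (n+2), ∑ i : Fin (L+1),
    ((-1 : R)^(j : ℕ) * m i) • Finsupp.single (chainFace L Θ n T i j) (1 : R))

/-- the full family of boundary operators `∂_k : F(R)_k(X) → F(R)_{k-1}(X)`
of the paper, with `∂_0 = 0`. -/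
def paperBoundary (L : ℕ) (m : Fin (L+1) → R)
    (Θ : ∀ n : ℕ, Fin (L+1) → (Spx (n+1) ≃ₜ Spx (n+1))) :
    ∀ k, Chains R X (k+1) →ₗ[R] Chains R X k
  | 0 => 0
  | (n+1) => bddry R X L m Θ n


/-!
For a threshold `a`, split each barycentric coordinate as `x_p = min x_p a + max (x_p - a) 0`.
The map `relevel a b` rescales the low parts by `b / a` and the high parts by the common factor
that restores total mass `1`. These maps form a flow (`relevel b c ∘ relevel a b = relevel a c`),
and `relevel a b` carries the face inserting the value `κ a` to the face inserting `κ b`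
(`κ ≤ 1`), at the price of relevelling the remaining coordinates. The face values of the paper are
`i / r_m` with `r_m = 2 (m + 1)`; taking `Θ_{n,i} = relevel (1 / r_n) (1 / (r_{n+1} - i))`, both
sides of the face equation become a double face of `relevel (1 / r_n) (1 / (r_{n+2} - i - k))`.
So the twisted face operators satisfy the simplicial identities, whence `∂ ∘ ∂ = 0`.
-/

theorem alternating_double_sum_eq_zero {S M : Type*} [CommRing S] [AddCommGroup M] [Module S M]
    {n : ℕ} (f : Fin (n + 3) → Fin (n + 2) → M)
    (hf : ∀ j p : Fin (n + 2), j ≤ p → f j.castSucc p = f p.succ j) :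
    ∑ j : Fin (n + 3), (-1 : S) ^ (j : ℕ) • ∑ p : Fin (n + 2), (-1 : S) ^ (p : ℕ) • f j p = 0 := by
  set F : Fin (n + 3) × Fin (n + 2) → M :=
    fun x => (-1 : S) ^ (x.1 : ℕ) • (-1 : S) ^ (x.2 : ℕ) • f x.1 x.2
  have cancel : ∀ j p : Fin (n + 2), j ≤ p → F (j.castSucc, p) + F (p.succ, j) = 0 := by
    intro j p h
    simp only [F, Fin.val_castSucc, Fin.val_succ, hf j p h, smul_smul, ← add_smul, pow_succ]
    convert zero_smul S (f p.succ j) using 2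
    ring
  let g : Fin (n + 3) × Fin (n + 2) → Fin (n + 3) × Fin (n + 2) := fun x =>
    if h : (x.1 : ℕ) ≤ x.2 then (⟨x.2 + 1, by omega⟩, ⟨x.1, by omega⟩)
    else (⟨x.2, by omega⟩, ⟨x.1 - 1, by omega⟩)
  simp only [Finset.smul_sum]
  rw [← Fintype.sum_prod_type' (f := fun j p => F (j, p))]
  refine Finset.sum_involution (fun x _ => g x) (fun ⟨j, p⟩ _ => ?_) (fun ⟨j, p⟩ _ _ => ?_)
    (fun _ _ => Finset.mem_univ _) (fun ⟨j, p⟩ _ => ?_)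
  · by_cases h : (j : ℕ) ≤ p
    · simp only [g, dif_pos h]
      exact cancel ⟨j, by omega⟩ p h
    · have hj : (⟨j - 1, by omega⟩ : Fin (n + 2)).succ = j := Fin.ext (by simp; omega)
      have := cancel p ⟨j - 1, by omega⟩ (by rw [Fin.le_def]; dsimp only; omega)
      rw [hj, add_comm] at this
      simp only [g, dif_neg h]
      exact this
  · by_cases h : (j : ℕ) ≤ p <;> simp [g, h, Prod.ext_iff, Fin.ext_iff] <;> omega
  · by_cases h : (j : ℕ) ≤ p
    · have h' : ¬ (p : ℕ) + 1 ≤ j := by omega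
      simp [g, h, h']
    · have h' : (p : ℕ) ≤ j - 1 := by omega
      simp [g, h, h', Prod.ext_iff, Fin.ext_iff]
      omega

section Boundary

def faceOp (L : ℕ) (m : Fin (L + 1) → R) (Θ : ∀ n : ℕ, Fin (L + 1) → (Spx (n + 1) ≃ₜ Spx (n + 1)))
    (n : ℕ) (j : Fin (n + 2)) : (C(Spx (n + 2), X) →₀ R) →ₗ[R] (C(Spx (n + 1), X) →₀ R) :=
  ∑ i, m i • Finsupp.lmapDomain R R (chainFace L Θ n · i j)

variable {R X} {L : ℕ} {m : Fin (L + 1) → R}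
  {Θ : ∀ n : ℕ, Fin (L + 1) → (Spx (n + 1) ≃ₜ Spx (n + 1))} {n : ℕ}

lemma faceOp_single (j : Fin (n + 2)) (T : C(Spx (n + 2), X)) (b : R) :
    faceOp R X L m Θ n j (Finsupp.single T b)
      = ∑ i, m i • Finsupp.single (chainFace L Θ n T i j) b := by
  simp [faceOp]

lemma bddry_eq_sum_faceOp :
    bddry R X L m Θ n = ∑ j : Fin (n + 2), (-1 : R) ^ (j : ℕ) • faceOp R X L m Θ n j := by
  refine Finsupp.lhom_ext fun T b => ?_
  rw [bddry, Finsupp.lift_apply, Finsupp.sum_single_index (by simp)]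
  simp only [LinearMap.sum_apply, LinearMap.smul_apply, faceOp_single, Finset.smul_sum,
    Finsupp.smul_single, smul_eq_mul, mul_one]
  exact Finset.sum_congr rfl fun j _ => Finset.sum_congr rfl fun i _ => congrArg _ (by ring)

lemma chainFace_chainFace_of_equationHolds {i k : Fin (L + 1)} {j p : Fin (n + 2)}
    (h : EquationHolds L Θ n i k j p) (T : C(Spx (n + 3), X)) :
    chainFace L Θ n (chainFace L Θ (n + 1) T i j.castSucc) k p
      = chainFace L Θ n (chainFace L Θ (n + 1) T k p.succ) i j := by
  ext x : 1
  simpa [chainFace, Fin.cast_val_eq_self] using congrArg T (h x)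

lemma faceOp_comp_faceOp {j p : Fin (n + 2)} (h : ∀ i k, EquationHolds L Θ n i k j p) :
    faceOp R X L m Θ n p ∘ₗ faceOp R X L m Θ (n + 1) j.castSucc
      = faceOp R X L m Θ n j ∘ₗ faceOp R X L m Θ (n + 1) p.succ := by
  refine Finsupp.lhom_ext fun T b => ?_
  simp only [LinearMap.comp_apply, faceOp_single, map_sum, map_smul, Finset.smul_sum,
    chainFace_chainFace_of_equationHolds (h _ _)]
  rw [Finset.sum_comm]
  exact Finset.sum_congr rfl fun _ _ => Finset.sum_congr rfl fun _ _ => smul_comm _ _ _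

theorem bddry_bddry_eq_zero (hΘ : ∀ i k (j p : Fin (n + 2)), j ≤ p → EquationHolds L Θ n i k j p)
    (u : C(Spx (n + 3), X) →₀ R) : bddry R X L m Θ n (bddry R X L m Θ (n + 1) u) = 0 := by
  simp only [bddry_eq_sum_faceOp, LinearMap.sum_apply, LinearMap.smul_apply, map_sum, map_smul]
  exact alternating_double_sum_eq_zero
    (fun j p => faceOp R X L m Θ n p (faceOp R X L m Θ (n + 1) j u))
    fun j p hjp => LinearMap.congr_fun (faceOp_comp_faceOp fun i k => hΘ i k j p hjp) u

end Boundary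

section Relevel

variable {k : ℕ}

def truncMass (a : ℝ) (x : Fin k → ℝ) : ℝ := ∑ q, min (x q) a

def relevel (a b : ℝ) (x : Fin k → ℝ) (p : Fin k) : ℝ :=
  b / a * min (x p) a + (1 - b / a * truncMass a x) / (1 - truncMass a x) * max (x p - a) 0

def IsThreshold (k : ℕ) (a : ℝ) : Prop := 0 < a ∧ k * a < 1

variable {a b : ℝ} {x : Fin k → ℝ}

lemma max_sub_zero_eq_sub_min (t a : ℝ) : max (t - a) 0 = t - min t a := by
  rw [← max_sub_sub_left, sub_self, max_comm]

lemma truncMass_le (a : ℝ) (x : Fin k → ℝ) : truncMass a x ≤ k * a := by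
  unfold truncMass
  simpa using Finset.sum_le_sum fun q (_ : q ∈ Finset.univ) => min_le_right (x q) a

lemma sum_max_sub_zero (hx : ∑ q, x q = 1) : ∑ q, max (x q - a) 0 = 1 - truncMass a x := by
  simp only [max_sub_zero_eq_sub_min, Finset.sum_sub_distrib, hx, truncMass]

lemma isThreshold_one_div {s : ℝ} (h : (k : ℝ) < s) : IsThreshold k (1 / s) := by
  have hs : 0 < s := (Nat.cast_nonneg k).trans_lt h
  exact ⟨by positivity, by rwa [mul_one_div, div_lt_one hs]⟩

namespace IsThreshold

lemma truncMass_lt_one (ha : IsThreshold k a) (x : Fin k → ℝ) : truncMass a x < 1 :=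
  (truncMass_le a x).trans_lt ha.2

lemma div_mul_truncMass_lt_one (ha : IsThreshold k a) (hb : IsThreshold k b) (x : Fin k → ℝ) :
    b / a * truncMass a x < 1 := by
  have hba : 0 ≤ b / a := div_nonneg hb.1.le ha.1.le
  calc b / a * truncMass a x ≤ b / a * (k * a) := mul_le_mul_of_nonneg_left (truncMass_le a x) hba
    _ = k * b := by field_simp [ha.1.ne']
    _ < 1 := hb.2

lemma lt_one {a : ℝ} (ha : IsThreshold (k + 1) a) : a < 1 := by
  have := ha.2
  push_cast at this
  nlinarith [ha.1, (Nat.cast_nonneg k : (0 : ℝ) ≤ k)]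

lemma div_one_sub_mul {a κ : ℝ} (ha : IsThreshold (k + 1) a) (hκ₁ : κ ≤ 1) :
    IsThreshold k (a / (1 - κ * a)) := by
  obtain ⟨ha₀, ha₁⟩ := ha
  push_cast at ha₁
  have hk : (0 : ℝ) ≤ k := Nat.cast_nonneg k
  have hκa : κ * a < 1 := by nlinarith
  refine ⟨div_pos ha₀ (sub_pos.2 hκa), ?_⟩
  rw [mul_div_assoc', div_lt_one (sub_pos.2 hκa)]
  nlinarith

lemma relevel_factor_pos (ha : IsThreshold k a) (hb : IsThreshold k b) (x : Fin k → ℝ) :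
    0 < (1 - b / a * truncMass a x) / (1 - truncMass a x) :=
  div_pos (sub_pos.2 (ha.div_mul_truncMass_lt_one hb x)) (sub_pos.2 (ha.truncMass_lt_one x))

lemma relevel_mem_stdSimplex (ha : IsThreshold k a) (hb : IsThreshold k b)
    (hx : x ∈ stdSimplex ℝ (Fin k)) : relevel a b x ∈ stdSimplex ℝ (Fin k) := by
  have hM := ha.truncMass_lt_one x
  refine ⟨fun p => ?_, ?_⟩
  · exact add_nonneg (mul_nonneg (div_nonneg hb.1.le ha.1.le) (le_min (hx.1 p) ha.1.le))
      (mul_nonneg (ha.relevel_factor_pos hb x).le (le_max_right _ _))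
  · simp only [relevel, Finset.sum_add_distrib, ← Finset.mul_sum, sum_max_sub_zero hx.2]
    rw [← truncMass, div_mul_cancel₀ _ (sub_pos.2 hM).ne']
    ring

lemma min_relevel (ha : IsThreshold k a) (hb : IsThreshold k b) (x : Fin k → ℝ) (p : Fin k) :
    min (relevel a b x p) b = b / a * min (x p) a := by
  rcases le_total (x p) a with hp | hp
  · have hle : b / a * x p ≤ b := by
      rw [div_mul_eq_mul_div, div_le_iff₀ ha.1]; exact mul_le_mul_of_nonneg_left hp hb.1.le
    simp [relevel, hp, hle]
  · have := ha.relevel_factor_pos hb x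
    have hge : b ≤ relevel a b x p := by
      simp only [relevel, min_eq_right hp, max_eq_left (sub_nonneg.2 hp),
        div_mul_cancel₀ _ ha.1.ne']
      nlinarith
    rw [min_eq_right hge, min_eq_right hp, div_mul_cancel₀ _ ha.1.ne']

lemma max_relevel_sub (ha : IsThreshold k a) (hb : IsThreshold k b) (x : Fin k → ℝ)
    (p : Fin k) : max (relevel a b x p - b) 0
      = (1 - b / a * truncMass a x) / (1 - truncMass a x) * max (x p - a) 0 := by
  rw [max_sub_zero_eq_sub_min, ha.min_relevel hb, relevel, add_sub_cancel_left]

lemma truncMass_relevel (ha : IsThreshold k a) (hb : IsThreshold k b) (x : Fin k → ℝ) :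
    truncMass b (relevel a b x) = b / a * truncMass a x := by
  simp only [truncMass, ha.min_relevel hb, ← Finset.mul_sum]

lemma relevel_relevel (ha : IsThreshold k a) (hb : IsThreshold k b) (c : ℝ)
    (x : Fin k → ℝ) : relevel b c (relevel a b x) = relevel a c x := by
  funext p
  have h₁ := (sub_pos.2 (ha.truncMass_lt_one x)).ne'
  have h₂ : a - b * truncMass a x ≠ 0 := by
    have := ha.div_mul_truncMass_lt_one hb x
    rw [div_mul_eq_mul_div, div_lt_one ha.1] at this
    linarith
  have := ha.1.ne'
  have := hb.1.ne'
  rw [relevel, ha.min_relevel hb, ha.max_relevel_sub hb, ha.truncMass_relevel hb, relevel]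
  field_simp

lemma relevel_self (ha : IsThreshold k a) (x : Fin k → ℝ) : relevel a a x = x := by
  funext p
  rw [relevel, div_self ha.1.ne', one_mul, one_mul,
    div_self (sub_pos.2 (ha.truncMass_lt_one x)).ne', one_mul, max_sub_zero_eq_sub_min]
  ring

lemma continuous_relevel (ha : IsThreshold k a) (b : ℝ) :
    Continuous (relevel a b : (Fin k → ℝ) → Fin k → ℝ) := by
  have hM : Continuous (truncMass a : (Fin k → ℝ) → ℝ) := by unfold truncMass; fun_prop
  have hM₁ : ∀ x, 1 - truncMass a x ≠ 0 := fun x => (sub_pos.2 (ha.truncMass_lt_one x)).ne'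
  refine continuous_pi fun p => ?_
  unfold relevel
  fun_prop (disch := exact hM₁)

end IsThreshold

def relevelHomeomorph (ha : IsThreshold k a) (hb : IsThreshold k b) : Spx k ≃ₜ Spx k where
  toFun x := ⟨relevel a b x, ha.relevel_mem_stdSimplex hb x.2⟩
  invFun x := ⟨relevel b a x, hb.relevel_mem_stdSimplex ha x.2⟩
  left_inv x := Subtype.ext <| (ha.relevel_relevel hb a x).trans (ha.relevel_self x)
  right_inv x := Subtype.ext <| (hb.relevel_relevel ha b x).trans (hb.relevel_self x)
  continuous_toFun := ((ha.continuous_relevel b).comp continuous_subtype_val).subtype_mk _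
  continuous_invFun := ((hb.continuous_relevel a).comp continuous_subtype_val).subtype_mk _

end Relevel

section InsertFace

variable {k : ℕ}

def insertFace (c : ℝ) (p : Fin (k + 1)) (y : Fin k → ℝ) : Fin (k + 1) → ℝ :=
  p.insertNth c fun q => (1 - c) * y q

@[simp]
lemma insertFace_apply_same (c : ℝ) (p : Fin (k + 1)) (y : Fin k → ℝ) :
    insertFace c p y p = c :=
  Fin.insertNth_apply_same _ _ _

@[simp]
lemma insertFace_apply_succAbove (c : ℝ) (p : Fin (k + 1)) (y : Fin k → ℝ) (q : Fin k) :
    insertFace c p y (p.succAbove q) = (1 - c) * y q :=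
  Fin.insertNth_apply_succAbove _ _ _ _

lemma Fin.castSucc_succAbove_succAbove {j p : Fin (k + 1)} (h : j ≤ p) (u : Fin k) :
    j.castSucc.succAbove (p.succAbove u) = p.succ.succAbove (j.succAbove u) := by
  rw [Fin.le_def] at h
  ext
  simp only [Fin.succAbove, Fin.lt_def, Fin.val_castSucc, Fin.val_succ]
  split_ifs <;> simp_all <;> omega

lemma insertFace_comm {j p : Fin (k + 1)} (h : j ≤ p) {s κ μ : ℝ} (hs : s ≠ 0)
    (hsκ : s - κ ≠ 0) (hsμ : s - μ ≠ 0) (y : Fin k → ℝ) :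
    insertFace (κ / s) j.castSucc (insertFace (μ / (s - κ)) p y)
      = insertFace (μ / s) p.succ (insertFace (κ / (s - μ)) j y) := by
  funext r
  rcases Fin.eq_self_or_eq_succAbove j.castSucc r with rfl | ⟨t, rfl⟩
  · conv_rhs => rw [← Fin.succAbove_succ_of_le p j h]
    simp only [insertFace_apply_same, insertFace_apply_succAbove]
    field_simp
  rcases Fin.eq_self_or_eq_succAbove p t with rfl | ⟨u, rfl⟩
  · conv_rhs => rw [Fin.succAbove_castSucc_of_le j t h]
    simp only [insertFace_apply_same, insertFace_apply_succAbove]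
    field_simp
  · conv_rhs => rw [Fin.castSucc_succAbove_succAbove h]
    simp only [insertFace_apply_succAbove]
    field_simp
    ring

lemma min_mul_eq_mul_min_div {c : ℝ} (hc : 0 < c) (t a : ℝ) :
    min (c * t) a = c * min t (a / c) := by
  rw [mul_min_of_nonneg _ _ hc.le, mul_div_cancel₀ _ hc.ne']

lemma max_mul_sub_eq_mul_max_sub_div {c : ℝ} (hc : 0 < c) (t a : ℝ) :
    max (c * t - a) 0 = c * max (t - a / c) 0 := by
  rw [mul_max_of_nonneg _ _ hc.le, mul_sub, mul_div_cancel₀ _ hc.ne', mul_zero]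

lemma truncMass_insertFace {a c : ℝ} (hca : c ≤ a) (hc : c < 1) (p : Fin (k + 1))
    (y : Fin k → ℝ) :
    truncMass a (insertFace c p y) = c + (1 - c) * truncMass (a / (1 - c)) y := by
  simp only [truncMass, Fin.sum_univ_succAbove _ p, insertFace_apply_same,
    insertFace_apply_succAbove, min_eq_left hca, min_mul_eq_mul_min_div (sub_pos.2 hc),
    Finset.mul_sum]

lemma relevel_insertFace {a b κ : ℝ} (ha : IsThreshold (k + 1) a) (hb : IsThreshold (k + 1) b)
    (hκ₁ : κ ≤ 1) (p : Fin (k + 1)) (y : Fin k → ℝ) :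
    relevel a b (insertFace (κ * a) p y)
      = insertFace (κ * b) p (relevel (a / (1 - κ * a)) (b / (1 - κ * b)) y) := by
  have hκa : κ * a ≤ a := mul_le_of_le_one_left ha.1.le hκ₁
  have hκb : κ * b ≤ b := mul_le_of_le_one_left hb.1.le hκ₁
  have ha₁ : κ * a < 1 := hκa.trans_lt ha.lt_one
  have hb₁ : κ * b < 1 := hκb.trans_lt hb.lt_one
  have hM := (ha.div_one_sub_mul hκ₁).truncMass_lt_one y
  funext r
  rcases Fin.eq_self_or_eq_succAbove p r with rfl | ⟨q, rfl⟩
  · simp only [relevel, insertFace_apply_same, min_eq_left hκa,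
      max_eq_right (sub_nonpos.2 hκa), mul_zero, add_zero]
    field_simp [ha.1.ne']
  · have hc : 0 < 1 - κ * a := sub_pos.2 ha₁
    simp only [relevel, insertFace_apply_succAbove, truncMass_insertFace hκa ha₁,
      min_mul_eq_mul_min_div hc, max_mul_sub_eq_mul_max_sub_div hc]
    generalize truncMass (a / (1 - κ * a)) y = M at hM ⊢
    generalize min (y q) (a / (1 - κ * a)) = m₁
    generalize max (y q - a / (1 - κ * a)) 0 = m₂
    have : a ≠ 0 := ha.1.ne'
    have : 1 - M ≠ 0 := (sub_pos.2 hM).ne'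
    have : 1 - a * κ ≠ 0 := (show 0 < 1 - a * κ by linarith).ne'
    have : 1 - b * κ ≠ 0 := (show 0 < 1 - b * κ by linarith).ne'
    rw [show 1 - (κ * a + (1 - κ * a) * M) = (1 - κ * a) * (1 - M) by ring]
    field_simp
    ring

end InsertFace

section Theta

variable {k : ℕ}

lemma relevel_one_div_insertFace {s t κ : ℝ} (hs : (k : ℝ) + 1 < s) (ht : (k : ℝ) + 1 < t)
    (hκ : κ ≤ 1) (p : Fin (k + 1)) (y : Fin k → ℝ) :
    relevel (1 / s) (1 / t) (insertFace (κ / s) p y)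
      = insertFace (κ / t) p (relevel (1 / (s - κ)) (1 / (t - κ)) y) := by
  have hs' : ((k + 1 : ℕ) : ℝ) < s := by push_cast; exact hs
  have ht' : ((k + 1 : ℕ) : ℝ) < t := by push_cast; exact ht
  have key := relevel_insertFace (isThreshold_one_div hs') (isThreshold_one_div ht') hκ p y
  have hk : (0 : ℝ) ≤ k := Nat.cast_nonneg k
  have e : ∀ r : ℝ, (k : ℝ) + 1 < r → 1 / r / (1 - κ * (1 / r)) = 1 / (r - κ) := by
    intro r hr
    have : r - κ ≠ 0 := by linarith
    have : r ≠ 0 := by linarith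
    field_simp
  rwa [e s hs, e t ht, mul_one_div, mul_one_div] at key

def twistedFace (r₀ r₁ κ : ℝ) (j : Fin (k + 1)) (x : Fin k → ℝ) : Fin (k + 1) → ℝ :=
  insertFace (κ / r₁) j (relevel (1 / r₀) (1 / (r₁ - κ)) x)

lemma twistedFace_comm {r₀ r₁ r₂ κ μ : ℝ} (h₀ : (k : ℝ) < r₀) (h₁ : (k : ℝ) + 1 < r₁)
    (h₂ : (k : ℝ) + 2 < r₂) (hκ : κ ≤ 1) (hμ : μ ≤ 1) {j p : Fin (k + 1)} (hjp : j ≤ p)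
    (x : Fin k → ℝ) :
    twistedFace r₁ r₂ κ j.castSucc (twistedFace r₀ r₁ μ p x)
      = twistedFace r₁ r₂ μ p.succ (twistedFace r₀ r₁ κ j x) := by
  have key : ∀ {κ μ : ℝ}, κ ≤ 1 → μ ≤ 1 → ∀ q : Fin (k + 1),
      relevel (1 / r₁) (1 / (r₂ - κ)) (twistedFace r₀ r₁ μ q x)
        = insertFace (μ / (r₂ - κ)) q (relevel (1 / r₀) (1 / (r₂ - κ - μ)) x) := by
    intro κ μ hκ hμ q
    rw [twistedFace, relevel_one_div_insertFace (by linarith) (by linarith) hμ,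
      (isThreshold_one_div h₀).relevel_relevel (isThreshold_one_div (by linarith))]
  simp only [twistedFace] at key ⊢
  rw [key hκ hμ, key hμ hκ, sub_right_comm r₂ μ κ]
  exact insertFace_comm hjp (by linarith) (by linarith) (by linarith) _

def faceDenom (m : ℕ) : ℝ := 2 * (m + 1)

lemma faceFun_one (m : ℕ) (i : Fin 2) (j : Fin (m + 1)) (x : Fin m → ℝ) :
    faceFun 1 m i j x = insertFace (i / faceDenom m) j x := by
  simp only [faceFun, insertFace, vval, faceDenom, Nat.cast_one, one_add_one_eq_two]

def theta (n : ℕ) (i : Fin 2) : Spx (n + 1) ≃ₜ Spx (n + 1) :=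
  relevelHomeomorph (a := 1 / faceDenom n) (b := 1 / (faceDenom (n + 1) - i))
    (isThreshold_one_div (by unfold faceDenom; push_cast; linarith [(n.cast_nonneg : (0 : ℝ) ≤ n)]))
    (isThreshold_one_div (by
      have : (i : ℝ) ≤ 1 := by exact_mod_cast Fin.is_le i
      unfold faceDenom; push_cast; linarith))

lemma coe_faceCM_theta (n : ℕ) (i : Fin 2) (j : Fin (n + 2)) (x : Spx (n + 1)) :
    (faceCM 1 (n + 1) i j (theta n i x)).1
      = twistedFace (faceDenom n) (faceDenom (n + 1)) i j x.1 :=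
  faceFun_one _ _ _ _

lemma theta_equationHolds (n : ℕ) (i k : Fin 2) {j p : Fin (n + 2)} (hjp : j ≤ p) :
    EquationHolds 1 theta n i k j p := by
  intro x
  have hn : (0 : ℝ) ≤ n := n.cast_nonneg
  apply Subtype.ext
  simp only [Fin.val_castSucc, Fin.cast_val_eq_self]
  rw [coe_faceCM_theta, coe_faceCM_theta, coe_faceCM_theta, coe_faceCM_theta]
  exact twistedFace_comm (by unfold faceDenom; push_cast; linarith)
    (by unfold faceDenom; push_cast; linarith) (by unfold faceDenom; push_cast; linarith)
    (by exact_mod_cast Fin.is_le i) (by exact_mod_cast Fin.is_le k) hjp x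

end Theta

theorem exists_theta_boundary_squared_zero :
    ∃ Θ : ∀ n : ℕ, Fin (1+1) → (Spx (n+1) ≃ₜ Spx (n+1)),
      ∀ (R : Type) [CommRing R] (m : Fin (1+1) → R)
        (X : Type) [TopologicalSpace X] (n : ℕ) (u : Chains R X (n+2)),
        paperBoundary R X 1 m Θ n (paperBoundary R X 1 m Θ (n+1) u) = 0 := by
  refine ⟨theta, fun R _ m X _ n u => ?_⟩
  cases n with
  | zero => rfl
  | succ n => exact bddry_bddry_eq_zero (fun i k j p hjp => theta_equationHolds n i k hjp) u

end
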